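/- Let G be a connected finite simple undirected graph and let (T,β) be a rooted compact tree decomposition of G. Let t be a non-root node of T, and let (A,B) be a partition of V(G_t) into two disjoint sets such that A ∩ σ(t) ≠ ∅ and B ∩ σ(t) ≠ ∅. Then the edge cut E_{G_t}(A,B) of the graph G_t is nonempty, i.e., G_t contains at least one edge with one endpoint in A and the other in B. -/

import Mathlib

/-- `s` is a descendant of `t` in the rooted tree given by the parent map `parent`
(every node is a descendant of itself). -/
def IsDesc {ι : Type*} (parent : ι → ι) (s t : ι) : Prop :=
  ∃ n : ℕ, parent^[n] s = t

/-- A rooted tree decomposition of a graph `G`: a rooted tree, given by a root and a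
parent map under which every node reaches the root, together with bags `bag t ⊆ V(G)`
such that every edge of `G` is contained in some bag, and for every vertex `v` the set of
nodes whose bag contains `v` induces a connected subtree (expressed by convexity along
root-paths together with closure under common ancestors). -/
structure IsRootedTreeDecomp {V ι : Type*} (G : SimpleGraph V) (root : ι) (parent : ι → ι)
    (bag : ι → Set V) : Prop where
  parent_root : parent root = root
  reaches_root : ∀ t : ι, IsDesc parent t root
  edge_covered : ∀ u v : V, G.Adj u v → ∃ t : ι, u ∈ bag t ∧ v ∈ bag t
  convex : ∀ (v : V) (s u t : ι), v ∈ bag s → v ∈ bag t →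
    IsDesc parent s u → IsDesc parent u t → v ∈ bag u
  meet : ∀ (v : V) (s t : ι), v ∈ bag s → v ∈ bag t →
    ∃ u : ι, IsDesc parent s u ∧ IsDesc parent t u ∧ v ∈ bag u

/-- The adhesion `σ(t)`: for a non-root node, `β(t) ∩ β(parent t)`; for the root, `∅`. -/
def adh {V ι : Type*} [DecidableEq ι] (root : ι) (parent : ι → ι) (bag : ι → Set V)
    (t : ι) : Set V :=
  if t = root then ∅ else bag t ∩ bag (parent t)

/-- `γ(t)`: the union of the bags of all descendants of `t`. -/
def gam {V ι : Type*} (parent : ι → ι) (bag : ι → Set V) (t : ι) : Set V :=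
  {v | ∃ s : ι, IsDesc parent s t ∧ v ∈ bag s}

/-- `α(t) = γ(t) \ σ(t)`. -/
def alp {V ι : Type*} [DecidableEq ι] (root : ι) (parent : ι → ι) (bag : ι → Set V)
    (t : ι) : Set V :=
  gam parent bag t \ adh root parent bag t

/-- The graph `G_t`: the subgraph of `G` induced on `γ(t)`, minus all edges with both
endpoints in `σ(t)` (realized as a graph on the vertex set of `G`, whose edges are
exactly those of `G_t`). -/
def Gsub {V ι : Type*} [DecidableEq ι] (G : SimpleGraph V) (root : ι) (parent : ι → ι)
    (bag : ι → Set V) (t : ι) : SimpleGraph V where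
  Adj u v := G.Adj u v ∧ u ∈ gam parent bag t ∧ v ∈ gam parent bag t ∧
    ¬(u ∈ adh root parent bag t ∧ v ∈ adh root parent bag t)
  symm := by
    constructor
    intro u v ⟨h, hu, hv, hn⟩
    exact ⟨h.symm, hv, hu, fun ⟨a, b⟩ => hn ⟨b, a⟩⟩
  loopless := by
    constructor
    intro v hv
    exact G.irrefl hv.1

/-- The graph `G_t[β(t)]`: the subgraph of `G_t` induced on the bag `β(t)`; its edges are
exactly the edges of `G` with both endpoints in `β(t)` but not both endpoints in `σ(t)`. -/
def GsubBag {V ι : Type*} [DecidableEq ι] (G : SimpleGraph V) (root : ι) (parent : ι → ι)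
    (bag : ι → Set V) (t : ι) : SimpleGraph V where
  Adj u v := G.Adj u v ∧ u ∈ bag t ∧ v ∈ bag t ∧
    ¬(u ∈ adh root parent bag t ∧ v ∈ adh root parent bag t)
  symm := by
    constructor
    intro u v ⟨h, hu, hv, hn⟩
    exact ⟨h.symm, hv, hu, fun ⟨a, b⟩ => hn ⟨b, a⟩⟩
  loopless := by
    constructor
    intro v hv
    exact G.irrefl hv.1

/-- The tree decomposition is compact: for every non-root node `t`, the induced subgraph
`G[α(t)]` is connected and `N_G(α(t)) = σ(t)`. -/
def IsCompactDecomp {V ι : Type*} [DecidableEq ι] (G : SimpleGraph V) (root : ι)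
    (parent : ι → ι) (bag : ι → Set V) : Prop :=
  ∀ t : ι, t ≠ root →
    (G.induce (alp root parent bag t)).Connected ∧
    {v | v ∉ alp root parent bag t ∧ ∃ u ∈ alp root parent bag t, G.Adj u v} =
      adh root parent bag t

/-!
By compactness every vertex of `σ(t)` has a `G`-neighbour in `α(t)`, and the edges
leaving `α(t)` are never removed in `G_t`; since `G[α(t)]` is connected, any two vertices of `σ(t)`
are joined by a walk in `G_t`. A walk from `A ∩ σ(t)` to `B ∩ σ(t)` inside `γ(t) = A ∪ B` must
cross from `A` to `B` along some edge.
-/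

section TreeDecomp

variable {V ι : Type*} [DecidableEq ι] {G : SimpleGraph V} {root : ι} {parent : ι → ι}
  {bag : ι → Set V} {t : ι}

lemma adh_subset_gam (ht : t ≠ root) : adh root parent bag t ⊆ gam parent bag t := by
  intro v hv
  rw [adh, if_neg ht] at hv
  exact ⟨t, ⟨0, rfl⟩, hv.1⟩

lemma alp_subset_gam : alp root parent bag t ⊆ gam parent bag t :=
  Set.sdiff_subset

lemma Gsub_adj_of_mem_alp {u v : V} (hadj : G.Adj u v) (hu : u ∈ alp root parent bag t)
    (hv : v ∈ gam parent bag t) : (Gsub G root parent bag t).Adj u v :=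
  ⟨hadj, alp_subset_gam hu, hv, fun h => hu.2 h.1⟩

def alpInduceHomGsub : G.induce (alp root parent bag t) →g Gsub G root parent bag t where
  toFun := Subtype.val
  map_rel' := fun {u v} h => Gsub_adj_of_mem_alp h u.2 (alp_subset_gam v.2)

lemma exists_Gsub_adj_mem_alp_of_mem_adh (hcompact : IsCompactDecomp G root parent bag)
    (ht : t ≠ root) {v : V} (hv : v ∈ adh root parent bag t) :
    ∃ u ∈ alp root parent bag t, (Gsub G root parent bag t).Adj u v := by
  have hN := hv
  rw [← (hcompact t ht).2] at hN
  obtain ⟨-, u, hu, hadj⟩ := hN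
  exact ⟨u, hu, Gsub_adj_of_mem_alp hadj hu (adh_subset_gam ht hv)⟩

lemma Gsub_reachable_of_mem_adh (hcompact : IsCompactDecomp G root parent bag)
    (ht : t ≠ root) {a b : V} (ha : a ∈ adh root parent bag t)
    (hb : b ∈ adh root parent bag t) : (Gsub G root parent bag t).Reachable a b := by
  obtain ⟨a', ha', haa'⟩ := exists_Gsub_adj_mem_alp_of_mem_adh hcompact ht ha
  obtain ⟨b', hb', hbb'⟩ := exists_Gsub_adj_mem_alp_of_mem_adh hcompact ht hb
  have hab' : (Gsub G root parent bag t).Reachable a' b' :=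
    ((hcompact t ht).1.preconnected ⟨a', ha'⟩ ⟨b', hb'⟩).map alpInduceHomGsub
  exact haa'.symm.reachable.trans (hab'.trans hbb'.reachable)

end TreeDecomp

theorem Gsub_crossing_edge_general {V ι : Type*} [DecidableEq ι]
    (G : SimpleGraph V)
    (root : ι) (parent : ι → ι) (bag : ι → Set V)
    (hcompact : IsCompactDecomp G root parent bag)
    (t : ι) (ht : t ≠ root)
    (A B : Set V) (hunion : A ∪ B = gam parent bag t) (hdisj : A ∩ B = ∅)
    (hA : (A ∩ adh root parent bag t).Nonempty)
    (hB : (B ∩ adh root parent bag t).Nonempty) :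
    ∃ u v : V, (Gsub G root parent bag t).Adj u v ∧ u ∈ A ∧ v ∈ B := by
  obtain ⟨a, haA, haS⟩ := hA
  obtain ⟨b, hbB, hbS⟩ := hB
  have hbA : b ∉ A := fun hbA => hdisj.subset ⟨hbA, hbB⟩
  obtain ⟨p⟩ := Gsub_reachable_of_mem_adh hcompact ht haS hbS
  obtain ⟨d, -, hdA, hdnA⟩ := p.exists_boundary_dart A haA hbA
  have hdB : d.snd ∈ B := (hunion.symm ▸ d.adj.2.2.1 : d.snd ∈ A ∪ B).resolve_left hdnA
  exact ⟨d.fst, d.snd, d.adj, hdA, hdB⟩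

/-- let `(T,β)` be a rooted compact tree decomposition of a connected graph
`G`, let `t` be a non-root node, and let `(A,B)` be a partition of `V(G_t) = γ(t)` with
`A ∩ σ(t) ≠ ∅` and `B ∩ σ(t) ≠ ∅`.  Then the edge cut `E_{G_t}(A,B)` is nonempty: `G_t`
contains an edge with one endpoint in `A` and the other in `B`. -/
theorem Gsub_crossing_edge {V ι : Type*} [Fintype V] [Fintype ι] [DecidableEq ι]
    (G : SimpleGraph V) (hG : G.Connected)
    (root : ι) (parent : ι → ι) (bag : ι → Set V)
    (hdec : IsRootedTreeDecomp G root parent bag)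
    (hcompact : IsCompactDecomp G root parent bag)
    (t : ι) (ht : t ≠ root)
    (A B : Set V) (hunion : A ∪ B = gam parent bag t) (hdisj : A ∩ B = ∅)
    (hA : (A ∩ adh root parent bag t).Nonempty)
    (hB : (B ∩ adh root parent bag t).Nonempty) :
    ∃ u v : V, (Gsub G root parent bag t).Adj u v ∧ u ∈ A ∧ v ∈ B :=
  Gsub_crossing_edge_general G root parent bag hcompact t ht A B hunion hdisj hA hB
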